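/- arXiv:1812.04260 — 8 statements merged into one kernel-verified Lean document; each statement's English description precedes it below -/
import Mathlib

section
/- Let E be a real normed vector space and C ⊆ E a convex cone (closed under addition and under scalar multiplication by positive reals), and let M ∈ E lie in the topological interior of C. Then for all vectors D, B ∈ E, the function ε ↦ pet(D + ε•B; M) tends to pet(D; M) as the real number ε tends to 0. -/
/-- The pseudo-effective threshold of `M` with respect to `D`, relative to the cone `C`. -/
noncomputable def pet {E : Type*} [NormedAddCommGroup E] [NormedSpace ℝ E]
    (C : Set E) (M D : E) : ℝ :=
  sInf {t : ℝ | 0 ≤ t ∧ D + t • M ∈ C}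

theorem pet_tendsto {E : Type*} [NormedAddCommGroup E] [NormedSpace ℝ E]
    (C : Set E)
    (hC_add : ∀ x ∈ C, ∀ y ∈ C, x + y ∈ C)
    (hC_smul : ∀ r : ℝ, 0 < r → ∀ x ∈ C, r • x ∈ C)
    (M : E) (hM : M ∈ interior C) (D B : E) :
    Filter.Tendsto (fun ε : ℝ => pet C M (D + ε • B)) (nhds 0) (nhds (pet C M D)) := by
  obtain ⟨δ, hδ, hball⟩ := Metric.mem_nhds_iff.1 (mem_interior_iff_mem_nhds.1 hM)
  -- absorption: a vector of norm < s * δ plus s • M lies in C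
  have hmem : ∀ (D' : E) (s : ℝ), ‖D'‖ < s * δ → 0 < s → D' + s • M ∈ C := by
    intro D' s hs hspos
    have h1 : M + s⁻¹ • D' ∈ C := by
      apply hball
      rw [Metric.mem_ball, dist_eq_norm]
      have : M + s⁻¹ • D' - M = s⁻¹ • D' := by abel
      rw [this, norm_smul, norm_inv, Real.norm_eq_abs, abs_of_pos hspos]
      rw [inv_mul_lt_iff₀ hspos]
      linarith
    have := hC_smul s hspos _ h1
    rwa [smul_add, smul_inv_smul₀ (ne_of_gt hspos), add_comm] at this
  have hne : ∀ D' : E, ∃ t, t ∈ {t : ℝ | 0 ≤ t ∧ D' + t • M ∈ C} := by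
    intro D'
    refine ⟨‖D'‖ / δ + 1, by positivity, ?_⟩
    apply hmem
    · rw [add_mul, div_mul_cancel₀ _ hδ.ne']
      linarith
    · positivity
  have hbdd : ∀ D' : E, BddBelow {t : ℝ | 0 ≤ t ∧ D' + t • M ∈ C} :=
    fun D' => ⟨0, fun t ht => ht.1⟩
  have key : ∀ (D' x : E), pet C M (D' + x) ≤ pet C M D' + ‖x‖ / δ := by
    intro D' x
    refine le_of_forall_pos_le_add fun η hη => ?_
    have hlt : sInf {t : ℝ | 0 ≤ t ∧ D' + t • M ∈ C} < pet C M D' + η / 2 := by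
      have : pet C M D' = sInf {t : ℝ | 0 ≤ t ∧ D' + t • M ∈ C} := rfl
      linarith
    obtain ⟨t, ⟨ht0, htC⟩, htlt⟩ :=
      exists_lt_of_csInf_lt (Set.nonempty_def.2 (hne D')) hlt
    set s : ℝ := ‖x‖ / δ + η / 2 with hs_def
    have hspos : 0 < s := by positivity
    have hxs : ‖x‖ < s * δ := by
      rw [hs_def, add_mul, div_mul_cancel₀ _ hδ.ne']
      nlinarith
    have hmem2 : (D' + x) + (t + s) • M ∈ C := by
      have heq : (D' + x) + (t + s) • M = (D' + t • M) + (x + s • M) := by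
        rw [add_smul]; abel
      rw [heq]
      exact hC_add _ htC _ (hmem x s hxs hspos)
    have hle : pet C M (D' + x) ≤ t + s :=
      csInf_le (hbdd _) ⟨by linarith, hmem2⟩
    rw [hs_def] at hle
    linarith
  have habs : ∀ ε : ℝ, |pet C M (D + ε • B) - pet C M D| ≤ ‖ε • B‖ / δ := by
    intro ε
    rw [abs_sub_le_iff]
    constructor
    · have := key D (ε • B)
      linarith
    · have := key (D + ε • B) (-(ε • B))
      rw [add_neg_cancel_right, norm_neg] at this
      linarith
  have h0 : Filter.Tendsto (fun ε : ℝ => pet C M (D + ε • B) - pet C M D)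
      (nhds 0) (nhds 0) := by
    have hc : Continuous fun ε : ℝ => ‖ε • B‖ / δ :=
      ((continuous_id.smul continuous_const).norm).div_const δ
    have hg : Filter.Tendsto (fun ε : ℝ => ‖ε • B‖ / δ) (nhds 0) (nhds 0) := by
      simpa using hc.tendsto 0
    exact squeeze_zero_norm (fun ε => by rw [Real.norm_eq_abs]; exact habs ε) hg
  have := h0.add_const (pet C M D)
  simpa using this
end

section
/- Let E be a real normed vector space and C ⊆ E a convex cone (closed under addition and under scalar multiplication by positive reals), let M ∈ E lie in the topological interior of C, and let D, B ∈ E. If a > 0 is a real number such that M − a•B ∈ C, then for every real ε ≥ 0 one has pet(D + ε•B; M) ≥ pet(D; M) − ε/a. -/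
/-- For `M` in the interior of a cone, every translate is eventually in the cone. -/
lemma pet_set_nonempty {E : Type*} [NormedAddCommGroup E] [NormedSpace ℝ E]
    (C : Set E) (hC_smul : ∀ r : ℝ, 0 < r → ∀ x ∈ C, r • x ∈ C)
    (M : E) (hM : M ∈ interior C) (x : E) :
    ∃ t : ℝ, 0 ≤ t ∧ x + t • M ∈ C := by
  obtain ⟨δ, hδ, hball⟩ := Metric.isOpen_iff.mp isOpen_interior M hM
  set t : ℝ := ‖x‖ / δ + 1 with ht
  have htpos : 0 < t := by positivity
  refine ⟨t, htpos.le, ?_⟩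
  have hmem : M + t⁻¹ • x ∈ C := by
    apply interior_subset
    apply hball
    rw [Metric.mem_ball, dist_eq_norm]
    have : M + t⁻¹ • x - M = t⁻¹ • x := by abel
    rw [this, norm_smul, norm_inv, Real.norm_eq_abs, abs_of_pos htpos]
    rw [inv_mul_lt_iff₀ htpos]
    rw [ht, add_mul, div_mul_cancel₀ _ hδ.ne', one_mul]
    linarith
  have := hC_smul t htpos _ hmem
  have heq : t • (M + t⁻¹ • x) = x + t • M := by
    rw [smul_add, smul_smul, mul_inv_cancel₀ htpos.ne', one_smul]; abel
  rwa [heq] at this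

theorem pet_lower_bound {E : Type*} [NormedAddCommGroup E] [NormedSpace ℝ E]
    (C : Set E)
    (hC_add : ∀ x ∈ C, ∀ y ∈ C, x + y ∈ C)
    (hC_smul : ∀ r : ℝ, 0 < r → ∀ x ∈ C, r • x ∈ C)
    (M : E) (hM : M ∈ interior C) (D B : E)
    (a : ℝ) (ha : 0 < a) (haB : M - a • B ∈ C) :
    ∀ ε : ℝ, 0 ≤ ε → pet C M (D + ε • B) ≥ pet C M D - ε / a := by
  intro ε hε
  rcases eq_or_lt_of_le hε with rfl | hε
  · simp [pet]
  obtain ⟨t0, ht0⟩ := pet_set_nonempty C hC_smul M hM (D + ε • B)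
  have hbdd : BddBelow {t : ℝ | 0 ≤ t ∧ D + t • M ∈ C} := ⟨0, fun t ht => ht.1⟩
  unfold pet
  rw [ge_iff_le]
  apply le_csInf ⟨t0, ht0⟩
  intro t ht
  obtain ⟨htn, htC⟩ := ht
  have hεa : 0 < ε / a := div_pos hε ha
  have hmem : D + (t + ε / a) • M ∈ C := by
    have h1 : (ε / a) • (M - a • B) ∈ C := hC_smul _ hεa _ haB
    have h2 := hC_add _ htC _ h1
    have heq : D + ε • B + t • M + (ε / a) • (M - a • B) = D + (t + ε / a) • M := by
      rw [smul_sub, smul_smul, div_mul_cancel₀ _ ha.ne', add_smul]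
      abel
    rwa [heq] at h2
  have : sInf {t : ℝ | 0 ≤ t ∧ D + t • M ∈ C} ≤ t + ε / a :=
    csInf_le hbdd ⟨by positivity, hmem⟩
  linarith
end

section
/- Let I ⊆ [0,1] be a set of real numbers. Then D(D(I)) = D(I) ∪ {1}. -/
/-!
Write `φₘ(y) = (m - 1 + y) / m`, so that `D(J) = φ(J_+) ∩ (-∞, 1]` with `φₘ ∘ φₙ = φₘₙ`.
The heart of the matter is that `D(I)_+ = D(I) ∪ {1}`: an element of `D(I)` is either in `I_+`
(when `m = 1`) or at least `1/2`. Adding `f ∈ I_+` to `φₘ(g)` gives `φₘ(m f + g)`, and two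
elements `≥ 1/2` can only sum to something `≤ 1` if the sum is `1`. Hence
`D(D(I)) = φ(D(I) ∪ {1}) = D(I) ∪ {1}`, since `φₘ(1) = 1`.
-/

open Finset in
/-- `I_+`: sums `∑ nᵢ aᵢ ≤ 1` with `aᵢ ∈ I`, `nᵢ` positive integers, together with `0`. -/
def Iplus (I : Set ℝ) : Set ℝ :=
  {x : ℝ | x ≤ 1 ∧ ∃ (r : ℕ), 0 < r ∧ ∃ (a : Fin r → ℝ) (n : Fin r → ℕ),
    (∀ i, a i ∈ I) ∧ (∀ i, 0 < n i) ∧ x = ∑ i, (n i : ℝ) * a i} ∪ {0}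

/-- `D(I) = {(m-1+f)/m ≤ 1 : m ∈ ℕ₊, f ∈ I_+}`. -/
def Dset (I : Set ℝ) : Set ℝ :=
  {x : ℝ | ∃ (m : ℕ) (f : ℝ), 0 < m ∧ f ∈ Iplus I ∧ x = ((m : ℝ) - 1 + f) / m} ∩ Set.Iic 1

/-- `D_c(I) = {(m-1+f+kc)/m ≤ 1 : m, k ∈ ℕ₊, f ∈ I_+}`. -/
def Dc (c : ℝ) (I : Set ℝ) : Set ℝ :=
  {x : ℝ | ∃ (m k : ℕ) (f : ℝ), 0 < m ∧ 0 < k ∧ f ∈ Iplus I ∧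
    x = ((m : ℝ) - 1 + f + (k : ℝ) * c) / m} ∩ Set.Iic 1

section

variable {I : Set ℝ}

lemma mem_Iplus_iff {x : ℝ} : x ∈ Iplus I ↔ x ≤ 1 ∧ x ∈ AddSubmonoid.closure I := by
  constructor
  · rintro (⟨hx1, r, -, a, n, ha, -, rfl⟩ | rfl)
    · refine ⟨hx1, AddSubmonoid.sum_mem _ fun i _ => ?_⟩
      simpa only [nsmul_eq_mul] using
        AddSubmonoid.nsmul_mem _ (AddSubmonoid.subset_closure (ha i)) (n i)
    · exact ⟨zero_le_one, zero_mem _⟩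
  · rintro ⟨hx1, hx⟩
    obtain ⟨l, hl, rfl⟩ := AddSubmonoid.exists_list_of_mem_closure hx
    rcases l with _ | ⟨b, t⟩
    · exact Or.inr rfl
    · refine Or.inl ⟨hx1, (b :: t).length, by simp, (b :: t).get, fun _ => 1,
        fun i => hl _ (List.get_mem _ i), fun _ => one_pos, ?_⟩
      simp only [Nat.cast_one, one_mul]
      rw [← List.sum_ofFn, List.ofFn_get]

lemma mem_Iplus_of_mem {x : ℝ} (hx : x ∈ I) (hx1 : x ≤ 1) : x ∈ Iplus I :=
  mem_Iplus_iff.2 ⟨hx1, AddSubmonoid.subset_closure hx⟩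

lemma Iplus_subset_Dset : Iplus I ⊆ Dset I := fun f hf =>
  ⟨⟨1, f, one_pos, hf, by norm_num⟩, (mem_Iplus_iff.1 hf).1⟩

lemma half_mem_Dset : (1 / 2 : ℝ) ∈ Dset I :=
  ⟨⟨2, 0, two_pos, Or.inr rfl, by norm_num⟩, by norm_num⟩

lemma nonneg_of_mem_closure (hI : I ⊆ Set.Ici 0) {x : ℝ} (hx : x ∈ AddSubmonoid.closure I) :
    0 ≤ x :=
  AddSubmonoid.closure_induction (fun _ h => hI h) le_rfl (fun _ _ _ _ => add_nonneg) hx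

lemma mem_Iplus_or_half_le_of_mem_Dset (hI : I ⊆ Set.Ici 0) {d : ℝ} (hd : d ∈ Dset I) :
    d ∈ Iplus I ∨ 1 / 2 ≤ d := by
  obtain ⟨⟨m, f, hm, hf, rfl⟩, -⟩ := hd
  have hf0 : 0 ≤ f := nonneg_of_mem_closure hI (mem_Iplus_iff.1 hf).2
  obtain rfl | hm2 : m = 1 ∨ 2 ≤ m := by omega
  · left
    simpa using hf
  · right
    have hm2 : (2 : ℝ) ≤ m := by exact_mod_cast hm2
    rw [le_div_iff₀ (by linarith)]
    linarith

lemma Dset_subset_Ici (hI : I ⊆ Set.Ici 0) : Dset I ⊆ Set.Ici 0 := by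
  intro d hd
  rcases mem_Iplus_or_half_le_of_mem_Dset hI hd with h | h
  · exact nonneg_of_mem_closure hI (mem_Iplus_iff.1 h).2
  · exact le_trans (by norm_num) h

lemma add_mem_Dset_of_mem_Iplus {f d : ℝ} (hf : f ∈ Iplus I) (hd : d ∈ Dset I)
    (h : f + d ≤ 1) : f + d ∈ Dset I := by
  obtain ⟨⟨M, g, hM, hg, rfl⟩, -⟩ := hd
  have hM : (0 : ℝ) < M := by exact_mod_cast hM
  have hsum : f + ((M : ℝ) - 1 + g) / M = ((M : ℝ) - 1 + (M * f + g)) / M := by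
    field_simp
    ring
  rw [hsum] at h ⊢
  refine ⟨⟨M, M * f + g, by exact_mod_cast hM, ?_, rfl⟩, h⟩
  refine mem_Iplus_iff.2 ⟨?_, ?_⟩
  · rw [div_le_one hM] at h
    linarith
  · simpa only [nsmul_eq_mul] using
      add_mem (AddSubmonoid.nsmul_mem _ (mem_Iplus_iff.1 hf).2 M) (mem_Iplus_iff.1 hg).2

lemma add_mem_Dset_union_one (hI : I ⊆ Set.Ici 0) {a b : ℝ} (ha : a ∈ Dset I)
    (hb : b ∈ Dset I) (h : a + b ≤ 1) : a + b ∈ Dset I ∪ {1} := by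
  rcases mem_Iplus_or_half_le_of_mem_Dset hI ha with ha' | ha'
  · exact Or.inl (add_mem_Dset_of_mem_Iplus ha' hb h)
  rcases mem_Iplus_or_half_le_of_mem_Dset hI hb with hb' | hb'
  · rw [add_comm] at h ⊢
    exact Or.inl (add_mem_Dset_of_mem_Iplus hb' ha h)
  · exact Or.inr (Set.mem_singleton_iff.2 (by linarith))

lemma mem_Dset_union_one_of_mem_closure (hI : I ⊆ Set.Ici 0) {x : ℝ}
    (hx : x ∈ AddSubmonoid.closure (Dset I)) (hx1 : x ≤ 1) : x ∈ Dset I ∪ {1} := by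
  induction hx using AddSubmonoid.closure_induction with
  | mem d hd => exact Or.inl hd
  | zero => exact Or.inl (Iplus_subset_Dset (Or.inr rfl))
  | add a b ha hb iha ihb =>
    have ha0 := nonneg_of_mem_closure (Dset_subset_Ici hI) ha
    have hb0 := nonneg_of_mem_closure (Dset_subset_Ici hI) hb
    rcases iha (by linarith), ihb (by linarith) with ⟨ha' | rfl, hb' | rfl⟩
    · exact add_mem_Dset_union_one hI ha' hb' hx1
    all_goals exact Or.inr (Set.mem_singleton_iff.2 (by linarith))

lemma Iplus_Dset (hI : I ⊆ Set.Ici 0) : Iplus (Dset I) = Dset I ∪ {1} := by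
  apply Set.Subset.antisymm
  · intro x hx
    exact mem_Dset_union_one_of_mem_closure hI (mem_Iplus_iff.1 hx).2 (mem_Iplus_iff.1 hx).1
  · rintro x (hx | rfl)
    · exact mem_Iplus_of_mem hx hx.2
    · refine mem_Iplus_iff.2 ⟨le_rfl, ?_⟩
      rw [show (1 : ℝ) = 1 / 2 + 1 / 2 by norm_num]
      exact add_mem (AddSubmonoid.subset_closure half_mem_Dset)
        (AddSubmonoid.subset_closure half_mem_Dset)

lemma sub_one_add_div_mem_Dset {M : ℕ} (hM : 0 < M) {d : ℝ} (hd : d ∈ Dset I) :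
    ((M : ℝ) - 1 + d) / M ∈ Dset I := by
  obtain ⟨⟨m, f, hm, hf, rfl⟩, hd1⟩ := hd
  have hM' : (0 : ℝ) < M := by exact_mod_cast hM
  have hm' : (0 : ℝ) < m := by exact_mod_cast hm
  refine ⟨⟨M * m, f, Nat.mul_pos hM hm, hf, ?_⟩, ?_⟩
  · push_cast
    field_simp
    ring
  · rw [Set.mem_Iic, div_le_one hM']
    linarith [Set.mem_Iic.1 hd1]

end

theorem D_of_D (I : Set ℝ) (hI : I ⊆ Set.Icc 0 1) :
    Dset (Dset I) = Dset I ∪ {1} := by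
  have hI0 : I ⊆ Set.Ici 0 := fun a ha => (hI ha).1
  apply Set.Subset.antisymm
  · rintro x ⟨⟨M, F, hM, hF, rfl⟩, -⟩
    rw [Iplus_Dset hI0] at hF
    rcases hF with hF | rfl
    · exact Or.inl (sub_one_add_div_mem_Dset hM hF)
    · right
      have hM' : (M : ℝ) ≠ 0 := by exact_mod_cast hM.ne'
      simp [hM']
  · rw [← Iplus_Dset hI0]
    exact Iplus_subset_Dset
end

section
/- Let I ⊆ [0,1] be a set of real numbers and let c > 0 be a real number. Then D_c(D(I)) = D_c(I). -/
/-!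
A number `f < 1` in `D(I)_+` already lies in `D(I)`. Indeed `I_+` is the additive closure of `I`
cut at `1`; adding `x ∈ I_+` to `(m-1+g)/m` gives `(m-1+g')/m` with `g' = g + m x`, and an
element of `D(I)` outside `I_+` has `m ≥ 2`, hence is at least `1/2`, so two of them sum to at
least `1`. As `kc > 0`, the `f` in an element `(m-1+f+kc)/m` of `D_c(D(I))` is below `1`, and
writing it as `(m₀-1+g)/m₀` gives `(m-1+f+kc)/m = (m m₀-1+g+k m₀ c)/(m m₀) ∈ D_c(I)`.
The reverse inclusion comes from `I ⊆ D(I)`.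
-/

lemma nonneg_of_mem_closure_s7 {S : Set ℝ} (hS : ∀ x ∈ S, 0 ≤ x) {x : ℝ}
    (hx : x ∈ AddSubmonoid.closure S) : 0 ≤ x :=
  (AddSubmonoid.closure_le (S := AddSubmonoid.nonneg ℝ)).mpr hS hx

lemma Iplus_eq_closure_inter_Iic (I : Set ℝ) :
    Iplus I = (AddSubmonoid.closure I : Set ℝ) ∩ Set.Iic 1 := by
  ext x
  constructor
  · rintro (⟨hx1, r, -, a, n, ha, -, rfl⟩ | rfl)
    · refine ⟨sum_mem fun i _ => ?_, hx1⟩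
      rw [← nsmul_eq_mul]
      exact nsmul_mem (AddSubmonoid.subset_closure (ha i)) _
    · exact ⟨zero_mem _, Set.mem_Iic.mpr zero_le_one⟩
  · rintro ⟨hx, hx1⟩
    obtain ⟨l, hl, rfl⟩ := AddSubmonoid.exists_list_of_mem_closure hx
    rcases l with _ | ⟨b, t⟩
    · exact Or.inr rfl
    · refine Or.inl ⟨hx1, (b :: t).length, by simp, fun i => (b :: t)[i.1], fun _ => 1,
        fun i => hl _ (List.getElem_mem _), fun _ => one_pos, ?_⟩
      simpa only [Nat.cast_one, one_mul] using (Fin.sum_univ_getElem _).symm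

lemma Iplus_mono {I J : Set ℝ} (h : I ⊆ J) : Iplus I ⊆ Iplus J := by
  simp only [Iplus_eq_closure_inter_Iic]
  exact Set.inter_subset_inter_left _ (AddSubmonoid.closure_mono h)

lemma Dc_mono (c : ℝ) {I J : Set ℝ} (h : I ⊆ J) : Dc c I ⊆ Dc c J := by
  rintro _ ⟨⟨m, k, f, hm, hk, hf, rfl⟩, hx1⟩
  exact ⟨⟨m, k, f, hm, hk, Iplus_mono h hf, rfl⟩, hx1⟩

lemma subset_Dset {I : Set ℝ} (hI : I ⊆ Set.Icc 0 1) : I ⊆ Dset I := by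
  intro a ha
  refine ⟨⟨1, a, one_pos, ?_, by norm_num⟩, (hI ha).2⟩
  rw [Iplus_eq_closure_inter_Iic]
  exact ⟨AddSubmonoid.subset_closure ha, (hI ha).2⟩

lemma zero_mem_Dset (I : Set ℝ) : (0 : ℝ) ∈ Dset I :=
  ⟨⟨1, 0, one_pos, Or.inr rfl, by norm_num⟩, Set.mem_Iic.mpr zero_le_one⟩

lemma nonneg_of_mem_Dset {I : Set ℝ} (hI : I ⊆ Set.Icc 0 1) {x : ℝ} (hx : x ∈ Dset I) :
    0 ≤ x := by
  obtain ⟨⟨m, f, hm, hf, rfl⟩, -⟩ := hx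
  rw [Iplus_eq_closure_inter_Iic] at hf
  have hf0 := nonneg_of_mem_closure_s7 (fun y hy => (hI hy).1) hf.1
  have hm1 : (1 : ℝ) ≤ m := by exact_mod_cast hm
  positivity

lemma mem_closure_or_half_le_of_mem_Dset {I : Set ℝ} (hI : I ⊆ Set.Icc 0 1) {x : ℝ}
    (hx : x ∈ Dset I) : x ∈ AddSubmonoid.closure I ∨ 1 / 2 ≤ x := by
  obtain ⟨⟨m, f, hm, hf, rfl⟩, -⟩ := hx
  rw [Iplus_eq_closure_inter_Iic] at hf
  obtain rfl | hm2 := (Nat.one_le_iff_ne_zero.mpr hm.ne').eq_or_lt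
  · left
    simpa using hf.1
  · right
    have hf0 := nonneg_of_mem_closure_s7 (fun y hy => (hI hy).1) hf.1
    have hm2' : (2 : ℝ) ≤ m := by exact_mod_cast hm2
    rw [le_div_iff₀ (by positivity)]
    linarith

lemma add_mem_Dset_of_mem_closure {I : Set ℝ} {x y : ℝ} (hx : x ∈ AddSubmonoid.closure I)
    (hy : y ∈ Dset I) (hxy : x + y ≤ 1) : x + y ∈ Dset I := by
  obtain ⟨⟨m, g, hm, hg, hy⟩, -⟩ := hy
  rw [Iplus_eq_closure_inter_Iic] at hg
  have hm' : (0 : ℝ) < m := by exact_mod_cast hm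
  have hmy : (m : ℝ) * y = m - 1 + g := by rw [hy]; field_simp
  have hm_sum : (m : ℝ) * (x + y) ≤ m := mul_le_of_le_one_right hm'.le hxy
  refine ⟨⟨m, g + m * x, hm, ?_, by rw [eq_div_iff hm'.ne']; linarith⟩, hxy⟩
  rw [Iplus_eq_closure_inter_Iic]
  refine ⟨add_mem hg.1 (by rw [← nsmul_eq_mul]; exact nsmul_mem hx m), ?_⟩
  rw [Set.mem_Iic]
  linarith

lemma one_le_or_mem_Dset_of_mem_closure {I : Set ℝ} (hI : I ⊆ Set.Icc 0 1) {f : ℝ}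
    (hf : f ∈ AddSubmonoid.closure (Dset I)) : 1 ≤ f ∨ f ∈ Dset I := by
  induction hf using AddSubmonoid.closure_induction with
  | mem b hb => exact Or.inr hb
  | zero => exact Or.inr (zero_mem_Dset I)
  | add x y hx hy ihx ihy =>
    have hx0 := nonneg_of_mem_closure_s7 (fun _ => nonneg_of_mem_Dset hI) hx
    have hy0 := nonneg_of_mem_closure_s7 (fun _ => nonneg_of_mem_Dset hI) hy
    by_cases hxy : 1 ≤ x + y
    · exact Or.inl hxy
    right
    have hxy' : x + y ≤ 1 := by linarith
    obtain hx1 | hxD := ihx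
    · linarith
    obtain hy1 | hyD := ihy
    · linarith
    obtain hxI | hx2 := mem_closure_or_half_le_of_mem_Dset hI hxD
    · exact add_mem_Dset_of_mem_closure hxI hyD hxy'
    obtain hyI | hy2 := mem_closure_or_half_le_of_mem_Dset hI hyD
    · rw [add_comm] at hxy' ⊢
      exact add_mem_Dset_of_mem_closure hyI hxD hxy'
    · linarith

lemma Dc_Dset_subset {I : Set ℝ} (hI : I ⊆ Set.Icc 0 1) {c : ℝ} (hc : 0 < c) :
    Dc c (Dset I) ⊆ Dc c I := by
  rintro _ ⟨⟨m, k, f, hm, hk, hf, rfl⟩, hx1⟩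
  rw [Iplus_eq_closure_inter_Iic] at hf
  have hm' : (0 : ℝ) < m := by exact_mod_cast hm
  have hkc : (0 : ℝ) < k * c := mul_pos (by exact_mod_cast hk) hc
  have hf1 : f < 1 := by
    rw [Set.mem_Iic, div_le_one hm'] at hx1
    linarith
  obtain hf1' | ⟨⟨m₀, g, hm₀, hg, rfl⟩, -⟩ := one_le_or_mem_Dset_of_mem_closure hI hf.1
  · linarith
  refine ⟨⟨m * m₀, k * m₀, g, Nat.mul_pos hm hm₀, Nat.mul_pos hk hm₀, hg, ?_⟩, hx1⟩
  have : (m₀ : ℝ) ≠ 0 := by positivity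
  push_cast
  field_simp
  ring

theorem Dc_of_D (I : Set ℝ) (hI : I ⊆ Set.Icc 0 1) (c : ℝ) (hc : 0 < c) :
    Dc c (Dset I) = Dc c I :=
  (Dc_Dset_subset hI hc).antisymm (Dc_mono c (subset_Dset hI))
end

section
/- Let I ⊆ [0,1] be a set of real numbers and let c ≥ 0 be a real number. Then D_c(D_c(I)) ⊆ D_c(I) ∪ {1}. -/
/-! The numbers `(m - 1 + f + k c) / m` with `m ≥ 1`, `k ≥ 0` and `f` in the additive monoid
generated by `I`, together with `[1, ∞)`, form an additive monoid. So an element of `(D_c I)_+`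
is either `≥ 1`, which forces the outer fraction to equal `1`, or of this form, and substituting
it into `(m - 1 + f + k c) / m` gives such a fraction again, with denominator `m n`. -/

lemma Iplus_subset_closure {I : Set ℝ} : Iplus I ⊆ AddSubmonoid.closure I := by
  rintro x (⟨-, r, -, a, n, ha, -, rfl⟩ | rfl)
  · exact AddSubmonoid.sum_mem _ fun i _ => by
      simpa only [nsmul_eq_mul] using nsmul_mem (AddSubmonoid.subset_closure (ha i)) (n i)
  · exact zero_mem _

lemma mem_Iplus_of_mem_closure {I : Set ℝ} {x : ℝ} (hx : x ∈ AddSubmonoid.closure I)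
    (hx1 : x ≤ 1) : x ∈ Iplus I := by
  obtain ⟨l, hl, rfl⟩ := AddSubmonoid.exists_list_of_mem_closure hx
  rcases l with _ | ⟨b, t⟩
  · exact Or.inr List.sum_nil
  · refine Or.inl ⟨hx1, (b :: t).length, List.length_pos_of_ne_nil (List.cons_ne_nil b t),
      (b :: t).get, fun _ => 1, fun i => hl _ (List.get_mem (b :: t) i), fun _ => one_pos, ?_⟩
    simpa only [Nat.cast_one, one_mul, List.ofFn_get] using List.sum_ofFn (f := (b :: t).get)

def DcForm (c : ℝ) (A : AddSubmonoid ℝ) : Set ℝ :=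
  {x | ∃ (m k : ℕ) (f : ℝ), 0 < m ∧ f ∈ A ∧ x = ((m : ℝ) - 1 + f + k * c) / m}

namespace DcForm

variable {c : ℝ} {A : AddSubmonoid ℝ}

lemma nonneg (hA : A ≤ AddSubmonoid.nonneg ℝ) (hc : 0 ≤ c) {x : ℝ} (hx : x ∈ DcForm c A) :
    0 ≤ x := by
  obtain ⟨m, k, f, hm, hf, rfl⟩ := hx
  have : (1 : ℝ) ≤ m := by exact_mod_cast hm
  have : 0 ≤ f := hA hf
  positivity

lemma half_le (hA : A ≤ AddSubmonoid.nonneg ℝ) (hc : 0 ≤ c) {m k : ℕ} {f : ℝ} (hm : 2 ≤ m)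
    (hf : f ∈ A) : 1 / 2 ≤ ((m : ℝ) - 1 + f + k * c) / m := by
  have hm' : (2 : ℝ) ≤ m := by exact_mod_cast hm
  have : 0 ≤ f := hA hf
  rw [div_le_div_iff₀ two_pos (by linarith)]
  nlinarith [mul_nonneg (Nat.cast_nonneg k) hc]

lemma add_left_mem {f y : ℝ} (hf : f ∈ A) (k : ℕ) (hy : y ∈ DcForm c A) :
    f + k * c + y ∈ DcForm c A := by
  obtain ⟨m, l, g, hm, hg, rfl⟩ := hy
  refine ⟨m, m * k + l, m • f + g, hm, A.add_mem (nsmul_mem hf m) hg, ?_⟩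
  have : (m : ℝ) ≠ 0 := by positivity
  field_simp
  push_cast
  rw [nsmul_eq_mul]
  ring

/-- Since elements with `m ≥ 2` are at least `1 / 2`, a sum of two such elements is at least `1`,
and otherwise one summand is of the form `f + k c`. -/
def addSubmonoid (hA : A ≤ AddSubmonoid.nonneg ℝ) (hc : 0 ≤ c) : AddSubmonoid ℝ where
  carrier := DcForm c A ∪ Set.Ici 1
  zero_mem' := Or.inl ⟨1, 0, 0, one_pos, A.zero_mem, by simp⟩
  add_mem' := by
    have hnonneg : ∀ x ∈ DcForm c A ∪ Set.Ici 1, 0 ≤ x := by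
      rintro x (hx | hx)
      exacts [nonneg hA hc hx, zero_le_one.trans hx]
    intro x y hx hy
    by_cases h : 1 ≤ x + y
    · exact Or.inr h
    left
    obtain ⟨m, k, f, hm, hf, rfl⟩ : x ∈ DcForm c A :=
      hx.resolve_right fun hx1 => h (by linarith [hnonneg y hy, Set.mem_Ici.mp hx1])
    obtain ⟨n, l, g, hn, hg, rfl⟩ : y ∈ DcForm c A :=
      hy.resolve_right fun hy1 => h (by linarith [hnonneg _ hx, Set.mem_Ici.mp hy1])
    have base : ∀ {f : ℝ} (k : ℕ), (((1 : ℕ) : ℝ) - 1 + f + k * c) / (1 : ℕ) = f + k * c := by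
      intro f k; simp
    obtain rfl | hm2 := (Nat.succ_le_of_lt hm).eq_or_lt
    · rw [base]
      exact add_left_mem hf k ⟨n, l, g, hn, hg, rfl⟩
    obtain rfl | hn2 := (Nat.succ_le_of_lt hn).eq_or_lt
    · rw [base, add_comm]
      exact add_left_mem hg l ⟨m, k, f, hm, hf, rfl⟩
    linarith [half_le hA hc (k := k) hm2 hf, half_le hA hc (k := l) hn2 hg]

end DcForm

lemma mem_Dc_of_mem_closure {I : Set ℝ} {c : ℝ} (hc : 0 ≤ c) {m k : ℕ} {f : ℝ} (hm : 0 < m)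
    (hk : 0 < k) (hf : f ∈ AddSubmonoid.closure I) (hx1 : ((m : ℝ) - 1 + f + k * c) / m ≤ 1) :
    ((m : ℝ) - 1 + f + k * c) / m ∈ Dc c I := by
  have hm' : (0 : ℝ) < m := by exact_mod_cast hm
  have hf1 : f ≤ 1 := by
    rw [div_le_one hm'] at hx1
    nlinarith [mul_nonneg (Nat.cast_nonneg k) hc]
  exact ⟨⟨m, k, f, hm, hk, mem_Iplus_of_mem_closure hf hf1, rfl⟩, hx1⟩

theorem Dc_of_Dc (I : Set ℝ) (hI : I ⊆ Set.Icc 0 1) (c : ℝ) (hc : 0 ≤ c) :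
    Dc c (Dc c I) ⊆ Dc c I ∪ {1} := by
  have hA : AddSubmonoid.closure I ≤ AddSubmonoid.nonneg ℝ :=
    AddSubmonoid.closure_le.mpr fun a ha => (hI ha).1
  have hDc : Dc c I ⊆ DcForm.addSubmonoid hA hc := by
    rintro x ⟨⟨m, k, f, hm, -, hf, rfl⟩, -⟩
    exact Or.inl ⟨m, k, f, hm, Iplus_subset_closure hf, rfl⟩
  rintro x ⟨⟨m, k, f, hm, hk, hf, rfl⟩, hx1⟩
  rcases AddSubmonoid.closure_le.mpr hDc (Iplus_subset_closure hf) with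
    ⟨n, l, g, hn, hg, rfl⟩ | hf1
  · have hcomp : ((m : ℝ) - 1 + ((n - 1 + g + l * c) / n) + k * c) / m =
        (((m * n : ℕ) : ℝ) - 1 + g + ((l + n * k : ℕ) : ℝ) * c) / (m * n : ℕ) := by
      have : (m : ℝ) ≠ 0 := by positivity
      have : (n : ℝ) ≠ 0 := by positivity
      field_simp
      push_cast
      ring
    rw [hcomp] at hx1 ⊢
    exact Or.inl (mem_Dc_of_mem_closure hc (Nat.mul_pos hm hn) (by positivity) hg hx1)
  · refine Or.inr (le_antisymm hx1 ?_)
    have hm' : (0 : ℝ) < m := by exact_mod_cast hm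
    rw [one_le_div hm']
    nlinarith [mul_nonneg (Nat.cast_nonneg k) hc, Set.mem_Ici.mp hf1]
end

section
/- Let I ⊆ [0,1] be a set of real numbers and let c > 0 be a real number. Then D_c(D(I) ∪ D_c(I)) ⊆ D_c(I) ∪ {1}. -/
/-!
Write `M` for the additive monoid generated by `I` and `J` for the set of all
`(m - 1 + g + k c) / m` with `m ≥ 1`, `k ≥ 0`, `g ∈ M`; it contains `D(I)` and `D_c(I)`.
An element of `J` is `≥ 1/2` unless `m = 1`, in which case it has the form `g + k c`,
and adding such an element to a member of `J` stays in `J`. Hence a sum of elements of `J`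
that is `< 1` lies again in `J`. The coefficient `f` of a point of `D_c(D(I) ∪ D_c(I))` is
such a sum, and `< 1` because `k c > 0`; substituting `f = (m' - 1 + g + k' c) / m'` into
`(m - 1 + f + k c) / m` gives `(m m' - 1 + g + (m' k + k') c) / (m m')`, a point of `D_c(I)`.
-/

lemma nonneg_of_mem_closure_s10 {α : Type*} [AddMonoid α] [Preorder α] [AddLeftMono α]
    {s : Set α} (hs : ∀ a ∈ s, 0 ≤ a) {a : α} (ha : a ∈ AddSubmonoid.closure s) :
    0 ≤ a :=
  AddSubmonoid.closure_le (S := AddSubmonoid.nonneg α).mpr hs ha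

def adjCoeffs (c : ℝ) (M : Set ℝ) : Set ℝ :=
  {x : ℝ | ∃ (m k : ℕ) (g : ℝ), 0 < m ∧ g ∈ M ∧
    x = ((m : ℝ) - 1 + g + (k : ℝ) * c) / m}

section adjCoeffs

variable {c : ℝ} {M : AddSubmonoid ℝ}

lemma zero_mem_adjCoeffs : (0 : ℝ) ∈ adjCoeffs c M :=
  ⟨1, 0, 0, one_pos, zero_mem M, by simp⟩

lemma nonneg_of_mem_adjCoeffs (hc : 0 ≤ c) (hM : ∀ g ∈ M, 0 ≤ g) {x : ℝ}
    (hx : x ∈ adjCoeffs c M) : 0 ≤ x := by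
  obtain ⟨m, k, g, hm, hg, rfl⟩ := hx
  have hm1 : (1 : ℝ) ≤ m := by exact_mod_cast hm
  have := hM g hg
  positivity

lemma half_le_of_mem_adjCoeffs (hc : 0 ≤ c) (hM : ∀ g ∈ M, 0 ≤ g) {m k : ℕ} {g : ℝ}
    (hm : 2 ≤ m) (hg : g ∈ M) : 1 / 2 ≤ ((m : ℝ) - 1 + g + (k : ℝ) * c) / m := by
  have hm2 : (2 : ℝ) ≤ m := by exact_mod_cast hm
  have := hM g hg
  rw [le_div_iff₀ (by linarith)]
  nlinarith [mul_nonneg (Nat.cast_nonneg k) hc]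

lemma add_mem_adjCoeffs {g : ℝ} (hg : g ∈ M) (k : ℕ) {y : ℝ} (hy : y ∈ adjCoeffs c M) :
    g + k * c + y ∈ adjCoeffs c M := by
  obtain ⟨m, k', g', hm, hg', rfl⟩ := hy
  refine ⟨m, m * k + k', g' + m • g, hm, add_mem hg' (AddSubmonoid.nsmul_mem _ hg _), ?_⟩
  have : (m : ℝ) ≠ 0 := by positivity
  rw [nsmul_eq_mul]
  push_cast
  field_simp
  ring

lemma mem_adjCoeffs_of_mem_closure (hc : 0 ≤ c) (hM : ∀ g ∈ M, 0 ≤ g) {x : ℝ}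
    (hx : x ∈ AddSubmonoid.closure (adjCoeffs c M)) (hx1 : x < 1) : x ∈ adjCoeffs c M := by
  induction hx using AddSubmonoid.closure_induction with
  | mem y hy => exact hy
  | zero => exact zero_mem_adjCoeffs
  | add y z hy hz ihy ihz =>
    have hy0 := nonneg_of_mem_closure_s10 (fun _ => nonneg_of_mem_adjCoeffs hc hM) hy
    have hz0 := nonneg_of_mem_closure_s10 (fun _ => nonneg_of_mem_adjCoeffs hc hM) hz
    obtain ⟨m, k, g, hm, hg, rfl⟩ := ihy (by linarith)
    obtain ⟨m', k', g', hm', hg', rfl⟩ := ihz (by linarith)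
    rcases Nat.lt_or_ge 1 m with hm2 | hm1
    · rcases Nat.lt_or_ge 1 m' with hm'2 | hm'1
      · linarith [half_le_of_mem_adjCoeffs (k := k) hc hM hm2 hg,
          half_le_of_mem_adjCoeffs (k := k') hc hM hm'2 hg']
      · obtain rfl : m' = 1 := by omega
        simpa [add_comm] using add_mem_adjCoeffs hg' k' ⟨m, k, g, hm, hg, rfl⟩
    · obtain rfl : m = 1 := by omega
      simpa using add_mem_adjCoeffs hg k ⟨m', k', g', hm', hg', rfl⟩

end adjCoeffs

lemma Dset_union_Dc_subset_adjCoeffs (I : Set ℝ) (c : ℝ) :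
    Dset I ∪ Dc c I ⊆ adjCoeffs c (AddSubmonoid.closure I) := by
  have h_closure {f : ℝ} (hf : f ∈ Iplus I) : f ∈ AddSubmonoid.closure I :=
    ((Iplus_eq_closure_inter_Iic I).subset hf).1
  rintro x (⟨⟨m, f, hm, hf, rfl⟩, -⟩ | ⟨⟨m, k, f, hm, -, hf, rfl⟩, -⟩)
  · exact ⟨m, 0, f, hm, h_closure hf, by simp⟩
  · exact ⟨m, k, f, hm, h_closure hf, rfl⟩

lemma nested_fraction {m m' : ℝ} (hm : m ≠ 0) (hm' : m' ≠ 0) (g c k k' : ℝ) :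
    (m - 1 + (m' - 1 + g + k' * c) / m' + k * c) / m
      = (m * m' - 1 + g + (m' * k + k') * c) / (m * m') := by
  field_simp
  ring

theorem Dc_of_union (I : Set ℝ) (hI : I ⊆ Set.Icc 0 1) (c : ℝ) (hc : 0 < c) :
    Dc c (Dset I ∪ Dc c I) ⊆ Dc c I ∪ {1} := by
  rintro x ⟨⟨m, k, f, hm, hk, hf, rfl⟩, hx1⟩
  have hM : ∀ g ∈ AddSubmonoid.closure I, 0 ≤ g :=
    fun _ => nonneg_of_mem_closure_s10 fun _ ha => (hI ha).1
  have hkc : 0 < (k : ℝ) * c := by positivity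
  have hm0 : (0 : ℝ) < m := by exact_mod_cast hm
  have hf1 : f < 1 := by
    rw [Set.mem_Iic, div_le_one hm0] at hx1
    linarith
  rw [Iplus_eq_closure_inter_Iic] at hf
  have hf_closure := AddSubmonoid.closure_mono (Dset_union_Dc_subset_adjCoeffs I c) hf.1
  obtain ⟨m', k', g, hm', hg, rfl⟩ := mem_adjCoeffs_of_mem_closure hc.le hM hf_closure hf1
  have hm'0 : (0 : ℝ) < m' := by exact_mod_cast hm'
  rw [nested_fraction hm0.ne' hm'0.ne'] at hx1 ⊢
  have hg1 : g ≤ 1 := by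
    rw [Set.mem_Iic, div_le_one (by positivity)] at hx1
    nlinarith [mul_nonneg hm'0.le (Nat.cast_nonneg k)]
  have hg_Iplus : g ∈ Iplus I := by
    rw [Iplus_eq_closure_inter_Iic]
    exact ⟨hg, hg1⟩
  exact Or.inl
    ⟨⟨m * m', m' * k + k', g, Nat.mul_pos hm hm', by positivity, hg_Iplus, by push_cast; rfl⟩,
      hx1⟩
end

section
/- Let I ⊆ [0,1] be a set of real numbers satisfying the descending chain condition. Then I_+ also satisfies the descending chain condition. -/
/-- A set of reals satisfies the descending chain condition (DCC) if it contains
no infinite strictly decreasing sequence. -/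
def DCC (S : Set ℝ) : Prop := ¬ ∃ f : ℕ → ℝ, (∀ n, f n ∈ S) ∧ StrictAnti f

theorem Iplus_DCC (I : Set ℝ) (hI : I ⊆ Set.Icc 0 1) (hDCC : DCC I) :
    DCC (Iplus I) := by
  have hWF : I.IsWF := by
    rw [Set.isWF_iff_no_descending_seq]
    intro g hg hmem
    exact hDCC ⟨g, fun n => hmem n, hg⟩
  have hPWO : Set.IsPWO (AddSubmonoid.closure I : Set ℝ) :=
    hWF.isPWO.addSubmonoid_closure (fun x hx => (hI hx).1)
  have hsub : Iplus I ⊆ (AddSubmonoid.closure I : Set ℝ) := by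
    rintro x (⟨-, r, -, a, n, ha, -, rfl⟩ | rfl)
    · exact AddSubmonoid.sum_mem _ fun i _ => by
        rw [← nsmul_eq_mul]
        exact AddSubmonoid.nsmul_mem _ (AddSubmonoid.subset_closure (ha i)) _
    · exact AddSubmonoid.zero_mem _
  have hWF' : (Iplus I).IsWF := hPWO.isWF.mono hsub
  rw [Set.isWF_iff_no_descending_seq] at hWF'
  rintro ⟨f, hf, hanti⟩
  exact hWF' f hanti hf
end

section
/- Let I ⊆ [0,1] be a set of real numbers satisfying the descending chain condition. Then D(I) satisfies the descending chain condition. -/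
lemma dcc_iff_isWF (S : Set ℝ) : DCC S ↔ S.IsWF := by
  rw [Set.isWF_iff_no_descending_seq, DCC]
  constructor
  · exact fun h f hf hmem => h ⟨f, hmem, hf⟩
  · rintro h ⟨f, hmem, hf⟩
    exact h f hf hmem

lemma Iplus_subset_addSubmonoidClosure (I : Set ℝ) :
    Iplus I ⊆ (AddSubmonoid.closure I : Set ℝ) := by
  rintro x (⟨-, r, -, a, n, ha, -, rfl⟩ | rfl)
  · refine AddSubmonoid.sum_mem _ fun i _ => ?_
    rw [← nsmul_eq_mul]
    exact AddSubmonoid.nsmul_mem _ (AddSubmonoid.subset_closure (ha i)) _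
  · exact AddSubmonoid.zero_mem _

lemma Iplus_nonneg {I : Set ℝ} (hI : I ⊆ Set.Ici 0) {f : ℝ} (hf : f ∈ Iplus I) : 0 ≤ f := by
  obtain ⟨-, r, -, a, n, ha, -, rfl⟩ | rfl := hf
  · exact Finset.sum_nonneg fun i _ => mul_nonneg (Nat.cast_nonneg _) (hI (ha i))
  · exact le_rfl

lemma Iplus_isPWO {I : Set ℝ} (hI : I ⊆ Set.Ici 0) (hwf : I.IsWF) : (Iplus I).IsPWO :=
  (Set.IsPWO.addSubmonoid_closure (fun _ hx => hI hx) hwf.isPWO).mono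
    (Iplus_subset_addSubmonoidClosure I)

lemma le_ceil_inv_of_sub_one_div_le {m : ℕ} (hm : 0 < m) {t : ℝ} (ht : t < 1)
    (h : ((m : ℝ) - 1) / m ≤ t) : m ≤ ⌈(1 - t)⁻¹⌉₊ := by
  have hm' : (0 : ℝ) < m := Nat.cast_pos.2 hm
  have hsub : 1 - t ≤ (m : ℝ)⁻¹ := by
    rw [sub_div, div_self hm'.ne', one_div] at h
    linarith
  exact Nat.cast_le.1 <| ((le_inv_comm₀ (sub_pos.2 ht) hm').1 hsub).trans (Nat.le_ceil _)

lemma Dset_inter_Iic_subset {I : Set ℝ} (hI : I ⊆ Set.Ici 0) {t : ℝ} (ht : t < 1) :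
    Dset I ∩ Set.Iic t ⊆
      ⋃ m ∈ Finset.Icc 1 ⌈(1 - t)⁻¹⌉₊, (fun f : ℝ => ((m : ℝ) - 1 + f) / m) '' Iplus I := by
  rintro _ ⟨⟨⟨m, f, hm, hf, rfl⟩, -⟩, hxt⟩
  have hlower : ((m : ℝ) - 1) / m ≤ ((m : ℝ) - 1 + f) / m := by
    gcongr
    exact le_add_of_nonneg_right (Iplus_nonneg hI hf)
  have hmM := le_ceil_inv_of_sub_one_div_le hm ht (hlower.trans hxt)
  exact Set.mem_biUnion (Finset.mem_Icc.2 ⟨hm, hmM⟩) ⟨f, hf, rfl⟩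

lemma Dset_inter_Iic_isWF {I : Set ℝ} (hI : I ⊆ Set.Ici 0) (hwf : I.IsWF) {t : ℝ}
    (ht : t < 1) : (Dset I ∩ Set.Iic t).IsWF := by
  refine Set.IsPWO.isWF (Set.IsPWO.mono ?_ (Dset_inter_Iic_subset hI ht))
  refine (Finset.isPWO_bUnion _).2 fun m hm => (Iplus_isPWO hI hwf).image_of_monotone ?_
  have hm' : (0 : ℝ) < m := Nat.cast_pos.2 (Finset.mem_Icc.1 hm).1
  intro x y hxy
  dsimp only
  gcongr

theorem Dset_DCC (I : Set ℝ) (hI : I ⊆ Set.Icc 0 1) (hDCC : DCC I) :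
    DCC (Dset I) := by
  rintro ⟨g, hg, hanti⟩
  have ht : g 1 < 1 := (hanti zero_lt_one).trans_le (hg 0).2
  have hwf := Dset_inter_Iic_isWF (fun _ hx => (hI hx).1) ((dcc_iff_isWF I).1 hDCC) ht
  rw [Set.isWF_iff_no_descending_seq] at hwf
  exact hwf (fun n => g (n + 1)) (fun a b hab => hanti (Nat.succ_lt_succ hab)) fun n =>
    ⟨hg (n + 1), hanti.antitone (Nat.le_add_left 1 n)⟩
end
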